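/- Let n = 2m and let f = ⊕_i f_i be a sum of short-cycle monomial rotation symmetric functions in n variables (each f_i has fewer than n monomials). If f is bent, then one of the f_i equals f₀ = ⊕_{i=0}^{m-1} x_i x_{m+i}. -/

import Mathlib

/-!
A monomial `T` of a short-cycle MRS function is fixed by some rotation `c ≠ 0`, and the minimum
of `T` is then smaller than both `c` and `-c` (otherwise subtracting would produce a smaller
element). So if `T` avoids the indices `0, …, m - 2`, then `c = m` and `T = {m - 1, 2m - 1}`,
whose rotations add up to `f₀`. Hence if no `f i` is `f₀`, every monomial meets those `m - 1`
indices `L`, and `f` is constant on the subspace `V` of vectors vanishing on `L`, of dimension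
`m + 1`. Summing the Walsh transform over the vectors supported on `L` gives
`2^|L| ∑_{x ∈ V} (-1)^f(x) = ±2^|L| |V|`, while bentness bounds the sum by `2^|L| 2^m`; so
`|V| ≤ 2^m`, a contradiction.
-/

open Finset

section Walsh

lemma neg_one_pow_val_add (a b : ZMod 2) :
    (-1 : ℤ) ^ (a + b).val = (-1) ^ a.val * (-1) ^ b.val := by
  revert a b; decide

lemma neg_one_pow_val_sum {α : Type*} (s : Finset α) (a : α → ZMod 2) :
    (-1 : ℤ) ^ (∑ i ∈ s, a i).val = ∏ i ∈ s, (-1) ^ (a i).val := by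
  classical
  induction s using Finset.induction_on with
  | empty => simp
  | insert j s hj ih => rw [sum_insert hj, prod_insert hj, neg_one_pow_val_add, ih]

lemma sum_neg_one_pow_val_mul (b : ZMod 2) :
    ∑ a : ZMod 2, (-1 : ℤ) ^ (a * b).val = if b = 0 then 2 else 0 := by
  revert b; decide

variable {ι : Type*} [Fintype ι] [DecidableEq ι]

lemma sum_neg_one_pow_dotProduct (y : ι → ZMod 2) :
    ∑ u : ι → ZMod 2, (-1 : ℤ) ^ (∑ i, u i * y i).val
      = if y = 0 then 2 ^ Fintype.card ι else 0 := by
  simp_rw [neg_one_pow_val_sum]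
  rw [← Fintype.prod_sum fun i a => (-1 : ℤ) ^ (a * y i).val]
  simp_rw [sum_neg_one_pow_val_mul, Fintype.prod_ite_zero, prod_const, card_univ, funext_iff,
    Pi.zero_apply]

def walsh (f : (ι → ZMod 2) → ZMod 2) (w : ι → ZMod 2) : ℤ :=
  ∑ x, (-1) ^ (f x + ∑ i, w i * x i).val

lemma sum_walsh_piecewise (f : (ι → ZMod 2) → ZMod 2) (L : Finset ι) :
    ∑ u, walsh f (L.piecewise u 0)
      = 2 ^ Fintype.card ι * ∑ x with ∀ i ∈ L, x i = 0, (-1 : ℤ) ^ (f x).val := by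
  have hswap : ∀ u x : ι → ZMod 2,
      ∑ i, L.piecewise u 0 i * x i = ∑ i, u i * L.piecewise x 0 i := by
    intro u x
    refine sum_congr rfl fun i _ => ?_
    by_cases hi : i ∈ L <;> simp [hi]
  have hzero : ∀ x : ι → ZMod 2, L.piecewise x 0 = 0 ↔ ∀ i ∈ L, x i = 0 := by
    intro x
    simp [funext_iff, Finset.piecewise]
  unfold walsh
  rw [sum_comm]
  simp_rw [neg_one_pow_val_add, ← mul_sum, hswap, sum_neg_one_pow_dotProduct, hzero, mul_ite,
    mul_zero, ← sum_filter, mul_sum, mul_comm]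

lemma card_filter_forall_mem_eq_zero (L : Finset ι) :
    #{x : ι → ZMod 2 | ∀ i ∈ L, x i = 0} = 2 ^ #Lᶜ := by
  have : ({x : ι → ZMod 2 | ∀ i ∈ L, x i = 0} : Finset _)
      = Fintype.piFinset fun i => if i ∈ L then {0} else univ := by
    ext x
    simp only [mem_filter, mem_univ, true_and, Fintype.mem_piFinset]
    refine forall_congr' fun i => ?_
    by_cases hi : i ∈ L <;> simp [hi]
  rw [this, Fintype.card_piFinset]
  simp [apply_ite, prod_ite, filter_not, compl_eq_univ_sdiff]

theorem card_compl_le_of_abs_walsh_le {m : ℕ} {f : (ι → ZMod 2) → ZMod 2}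
    (hf : ∀ w, |walsh f w| ≤ 2 ^ m) {L : Finset ι} {c : ZMod 2}
    (hconst : ∀ x, (∀ i ∈ L, x i = 0) → f x = c) : #Lᶜ ≤ m := by
  have hV : ∑ x with ∀ i ∈ L, x i = 0, (-1 : ℤ) ^ (f x).val = 2 ^ #Lᶜ * (-1) ^ c.val := by
    rw [sum_congr rfl fun x hx => by rw [hconst x (mem_filter.1 hx).2], sum_const,
      card_filter_forall_mem_eq_zero, nsmul_eq_mul, Nat.cast_pow, Nat.cast_ofNat]
  have hle : (2 : ℤ) ^ Fintype.card ι * 2 ^ #Lᶜ ≤ 2 ^ Fintype.card ι * 2 ^ m :=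
    calc (2 : ℤ) ^ Fintype.card ι * 2 ^ #Lᶜ = |∑ u, walsh f (L.piecewise u 0)| := by
          rw [sum_walsh_piecewise, hV]; simp [abs_mul]
      _ ≤ ∑ u, |walsh f (L.piecewise u 0)| := abs_sum_le_sum_abs _ _
      _ ≤ ∑ _u : ι → ZMod 2, (2 : ℤ) ^ m := sum_le_sum fun u _ => hf _
      _ = 2 ^ Fintype.card ι * 2 ^ m := by simp
  have := le_of_mul_le_mul_left hle (by positivity)
  exact (pow_le_pow_iff_right₀ (by norm_num)).1 this

end Walsh

section Translates

variable {G : Type*} [AddCommGroup G] [DecidableEq G]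

lemma image_add_image_add (A : Finset G) (a b : G) :
    (A.image (· + a)).image (· + b) = A.image (· + (a + b)) := by
  simp only [image_image, Function.comp_def, add_assoc]

lemma image_add_neg_eq {A : Finset G} {c : G} (hc : A.image (· + c) = A) :
    A.image (· + -c) = A :=
  calc A.image (· + -c) = (A.image (· + c)).image (· + -c) := by rw [hc]
    _ = A := by
      rw [image_add_image_add, add_neg_cancel]
      simp only [add_zero, image_id']

lemma sub_mem_of_image_add_eq {A : Finset G} {c t : G} (hc : A.image (· + c) = A)
    (ht : t ∈ A) : t - c ∈ A := by
  rw [← image_add_neg_eq hc, sub_eq_add_neg]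
  exact mem_image_of_mem _ ht

variable [Fintype G]

def translates (A : Finset G) : Finset (Finset G) := univ.image fun j => A.image (· + j)

def mrs (A : Finset G) (x : G → ZMod 2) : ZMod 2 := ∑ T ∈ translates A, ∏ t ∈ T, x t

lemma translates_image_add (A : Finset G) (a : G) :
    translates (A.image (· + a)) = translates A := by
  ext T
  simp only [translates, mem_image, mem_univ, true_and, image_add_image_add]
  exact ⟨fun ⟨j, h⟩ => ⟨a + j, h⟩,
    fun ⟨j, h⟩ => ⟨j - a, by rwa [add_sub_cancel]⟩⟩

lemma translates_eq_of_mem {A B : Finset G} (h : B ∈ translates A) :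
    translates B = translates A := by
  obtain ⟨a, -, rfl⟩ := mem_image.1 h
  exact translates_image_add A a

lemma image_add_eq_of_mem_translates {A T : Finset G} (hT : T ∈ translates A) {c : G}
    (hc : A.image (· + c) = A) : T.image (· + c) = T := by
  obtain ⟨a, -, rfl⟩ := mem_image.1 hT
  rw [image_add_image_add, add_comm, ← image_add_image_add, hc]

lemma exists_ne_zero_image_add_eq_of_card_translates_lt {A : Finset G}
    (h : #(translates A) < Fintype.card G) : ∃ c ≠ 0, A.image (· + c) = A := by
  obtain ⟨a, -, b, -, hab, he⟩ := exists_ne_map_eq_of_card_lt_of_maps_to (s := univ)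
    (by rwa [card_univ]) fun a _ => mem_image_of_mem (fun j => A.image (· + j)) (mem_univ a)
  refine ⟨a - b, sub_ne_zero.2 hab, ?_⟩
  have h := congrArg (·.image (· + -b)) he
  simp only [image_add_image_add, add_neg_cancel, add_zero, image_id'] at h
  rwa [sub_eq_add_neg]

lemma mrs_eq_mrs_zero {A : Finset G} {x : G → ZMod 2}
    (hx : ∀ T ∈ translates A, T.Nonempty → ∃ t ∈ T, x t = 0) : mrs A x = mrs A 0 := by
  refine sum_congr rfl fun T hT => ?_
  obtain rfl | hne := T.eq_empty_or_nonempty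
  · simp only [prod_empty]
  · obtain ⟨t, ht, hxt⟩ := hx T hT hne
    rw [prod_eq_zero ht hxt, prod_eq_zero ht rfl]

end Translates

lemma exists_val_lt_of_image_add_eq {n : ℕ} [NeZero n] {T : Finset (Fin n)} (hT : T.Nonempty)
    {c : Fin n} (hc0 : c ≠ 0) (hc : T.image (· + c) = T) : ∃ t ∈ T, t.val < c.val := by
  refine ⟨T.min' hT, T.min'_mem hT, ?_⟩
  by_contra! hle
  have := T.min'_le _ (sub_mem_of_image_add_eq hc (T.min'_mem hT))
  have : c.val ≠ 0 := Fin.val_ne_zero_iff.mpr hc0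
  fin_omega

def lastAntipodalPair (m : ℕ) [NeZero m] : Finset (Fin (2 * m)) :=
  {⟨m - 1, by have := NeZero.pos m; omega⟩, ⟨2 * m - 1, by have := NeZero.pos m; omega⟩}

lemma eq_lastAntipodalPair_of_image_add_eq {m : ℕ} [NeZero m] {T : Finset (Fin (2 * m))}
    (hT : T.Nonempty) {c : Fin (2 * m)} (hc0 : c ≠ 0) (hc : T.image (· + c) = T)
    (hhigh : ∀ t ∈ T, m ≤ t.val + 1) : T = lastAntipodalPair m := by
  have hc0' : c.val ≠ 0 := Fin.val_ne_zero_iff.mpr hc0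
  have hcm : c.val = m := by
    obtain ⟨t, ht, htc⟩ := exists_val_lt_of_image_add_eq hT hc0 hc
    obtain ⟨t', ht', htc'⟩ :=
      exists_val_lt_of_image_add_eq hT (neg_ne_zero.2 hc0) (image_add_neg_eq hc)
    rw [Fin.val_neg', Nat.mod_eq_of_lt (by omega)] at htc'
    have := hhigh t ht
    have := hhigh t' ht'
    omega
  refine eq_of_subset_of_card_le (fun t ht => ?_) ?_
  · have hlow := hhigh _ (sub_mem_of_image_add_eq hc ht)
    simp only [lastAntipodalPair, mem_insert, mem_singleton, Fin.ext_iff]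
    by_cases htm : t.val < m
    · have := hhigh t ht
      omega
    · rw [Fin.sub_val_of_le (by rw [Fin.le_def]; omega)] at hlow
      omega
  · obtain ⟨t, ht⟩ := hT
    have htc : t + c ∈ T := hc ▸ mem_image_of_mem _ ht
    calc _ ≤ 2 := card_le_two
      _ ≤ #T := one_lt_card.2 ⟨t, ht, t + c, htc, by simpa using hc0⟩

lemma exists_val_add_one_lt_of_mem_translates {m : ℕ} [NeZero m] {A T : Finset (Fin (2 * m))}
    (hshort : #(translates A) < 2 * m) (hA : lastAntipodalPair m ∉ translates A)
    (hT : T ∈ translates A) (hne : T.Nonempty) : ∃ t ∈ T, t.val + 1 < m := by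
  obtain ⟨c, hc0, hc⟩ :=
    exists_ne_zero_image_add_eq_of_card_translates_lt (by rwa [Fintype.card_fin])
  by_contra! hhigh
  exact hA (eq_lastAntipodalPair_of_image_add_eq hne hc0
    (image_add_eq_of_mem_translates hT hc) hhigh ▸ hT)

lemma translates_lastAntipodalPair (m : ℕ) [NeZero m] :
    translates (lastAntipodalPair m)
      = univ.image fun i : Fin m => {⟨i.val, by omega⟩, ⟨m + i.val, by omega⟩} := by
  have hm := NeZero.pos m
  have hpair : lastAntipodalPair m
      = ({0, ⟨m, by omega⟩} : Finset (Fin (2 * m))).image (· + ⟨m - 1, by omega⟩) := by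
    rw [lastAntipodalPair, image_insert, image_singleton, zero_add]
    ext t
    simp only [mem_insert, mem_singleton, Fin.ext_iff, Fin.val_add_eq_ite]
    split_ifs <;> omega
  rw [hpair, translates_image_add]
  ext T
  simp only [translates, mem_image, mem_univ, true_and, image_insert, image_singleton, zero_add]
  constructor
  · rintro ⟨j, rfl⟩
    refine ⟨⟨if j.val < m then j.val else j.val - m, by split_ifs <;> omega⟩, ?_⟩
    ext t
    simp only [mem_insert, mem_singleton, Fin.ext_iff, Fin.val_add_eq_ite]
    split_ifs <;> omega
  · rintro ⟨i, rfl⟩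
    refine ⟨⟨i.val, by omega⟩, ?_⟩
    ext t
    simp only [mem_insert, mem_singleton, Fin.ext_iff, Fin.val_add_eq_ite]
    split_ifs <;> omega

lemma mrs_lastAntipodalPair {m : ℕ} [NeZero m] (x : Fin (2 * m) → ZMod 2) :
    mrs (lastAntipodalPair m) x
      = ∑ i : Fin m, x ⟨i.val, by omega⟩ * x ⟨m + i.val, by omega⟩ := by
  rw [mrs, translates_lastAntipodalPair, sum_image]
  · exact sum_congr rfl fun i _ => prod_pair (by simpa [Fin.ext_iff] using NeZero.ne m)
  · intro i _ j _ h
    have : (⟨i.val, by omega⟩ : Fin (2 * m))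
        ∈ ({⟨j.val, by omega⟩, ⟨m + j.val, by omega⟩} : Finset _) := by
      simp only at h
      rw [← h]
      exact mem_insert_self _ _
    simp only [mem_insert, mem_singleton, Fin.ext_iff] at this
    omega

/-- Let `n = 2m` and `f = ⊕_i f_i` be a sum of short-cycle MRS functions
(each with fewer than `n` monomials). If `f` is bent, then one of the `f_i` equals
`f₀ = ⊕_{i=0}^{m-1} x_i x_{m+i}`. -/
theorem stmt14 (m s : ℕ) (hm : 0 < m) (S : Fin s → Finset (Fin (2*m)))
    (hshort : ∀ i, (Finset.univ.image (fun j : Fin (2*m) => (S i).image (· + j))).card < 2*m)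
    (hbent : ∀ w : Fin (2*m) → ZMod 2,
      (∑ x : Fin (2*m) → ZMod 2,
        (-1 : ℤ) ^ (((∑ i : Fin s, ∑ T ∈ Finset.univ.image
              (fun j : Fin (2*m) => (S i).image (· + j)), ∏ t ∈ T, x t)
          + ∑ i, w i * x i).val)) = 2 ^ m ∨
      (∑ x : Fin (2*m) → ZMod 2,
        (-1 : ℤ) ^ (((∑ i : Fin s, ∑ T ∈ Finset.univ.image
              (fun j : Fin (2*m) => (S i).image (· + j)), ∏ t ∈ T, x t)
          + ∑ i, w i * x i).val)) = -(2 ^ m)) :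
    ∃ i : Fin s, ∀ x : Fin (2*m) → ZMod 2,
      (∑ T ∈ Finset.univ.image (fun j : Fin (2*m) => (S i).image (· + j)), ∏ t ∈ T, x t)
        = ∑ i : Fin m, x ⟨i.val, by have := i.isLt; omega⟩ *
            x ⟨m + i.val, by have := i.isLt; omega⟩ := by
  have : NeZero m := ⟨hm.ne'⟩
  by_cases hP : ∃ i, lastAntipodalPair m ∈ translates (S i)
  · obtain ⟨i, hi⟩ := hP
    refine ⟨i, fun x => ?_⟩
    change mrs (S i) x = _
    rw [mrs, ← translates_eq_of_mem hi]
    exact mrs_lastAntipodalPair x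
  · exfalso
    simp only [not_exists] at hP
    set L : Finset (Fin (2 * m)) := {t | t.val + 1 < m}
    have hconst : ∀ x, (∀ t ∈ L, x t = 0) → ∑ i, mrs (S i) x = ∑ i, mrs (S i) 0 :=
      fun x hx => sum_congr rfl fun i _ => mrs_eq_mrs_zero fun T hT hne =>
        have ⟨t, ht, hlow⟩ := exists_val_add_one_lt_of_mem_translates (hshort i) (hP i) hT hne
        ⟨t, ht, hx t (mem_filter.2 ⟨mem_univ t, hlow⟩)⟩
    have hcard := card_compl_le_of_abs_walsh_le (f := fun x => ∑ i, mrs (S i) x)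
      (fun w => ((abs_eq (by positivity)).2 (hbent w)).le) hconst
    have hL : #L ≤ m - 1 :=
      calc #L ≤ #(range (m - 1)) := card_le_card_of_injOn Fin.val
            (fun t ht => mem_range.2 (by have := (mem_filter.1 (mem_coe.1 ht)).2; omega))
            Fin.val_injective.injOn
        _ = m - 1 := card_range _
    rw [card_compl, Fintype.card_fin] at hcard
    omega
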